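/- For every x ≥ 1, letting t(x) be the unique maximizer in (0,x) of t ↦ τ(x,t), one has α(x) := τ(x, t(x)) < x/(3x+1); in particular α(x) < 1/3. -/

import Mathlib

/-!
At a critical point `t` of `τ(x, ·)` the vanishing of the derivative says
`(t/(1+t))^x = (1+t)² / D` with `D = x² + (t+1)² + x(t+2)`. Substituting this into `τ` removes
the power and leaves the rational function `τ(x, t) = ψ(x, t) = (x+1)t / D`. Since `u v < (x+1)²`
for `0 ≤ u < v ≤ x+1`, `ψ(x, ·)` is strictly increasing on `[0, x+1]`, hence
`τ(x, t) < ψ(x, x) = x / (3x+1)` whenever `t < x`.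
-/

noncomputable def tau (x t : ℝ) : ℝ := (1/x) * (t - (t + x + 1) * (t/(1+t)) ^ (x+1))

noncomputable def psi (x u : ℝ) : ℝ := (x + 1) * u / (x ^ 2 + (u + 1) ^ 2 + x * (u + 2))

lemma hasDerivAt_tau {x t : ℝ} (ht : 0 < t) :
    HasDerivAt (tau x)
      (1 / x * (1 - (t / (1 + t)) ^ x * (x ^ 2 + (t + 1) ^ 2 + x * (t + 2)) / (1 + t) ^ 2)) t := by
  have h1t : 1 + t ≠ 0 := by positivity
  have hq : 0 < t / (1 + t) := by positivity
  have hdq : HasDerivAt (fun s : ℝ => s / (1 + s)) (1 / (1 + t) ^ 2) t :=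
    ((hasDerivAt_id' t).div ((hasDerivAt_id' t).const_add 1) h1t).congr_deriv (by field_simp; ring)
  have h := (((hasDerivAt_id' t).sub
    ((((hasDerivAt_id' t).add_const x).add_const 1).mul
      (hdq.rpow_const (p := x + 1) (Or.inl hq.ne')))).const_mul (1 / x))
  refine h.congr_deriv ?_
  rw [add_sub_cancel_right, Real.rpow_add hq, Real.rpow_one]
  field_simp
  ring

lemma tau_eq_psi_of_deriv_eq_zero {x t : ℝ} (hx : 0 < x) (ht : 0 < t)
    (hcrit : deriv (tau x) t = 0) : tau x t = psi x t := by
  have hD : 0 < x ^ 2 + (t + 1) ^ 2 + x * (t + 2) := by positivity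
  have hpow : (t / (1 + t)) ^ x = (1 + t) ^ 2 / (x ^ 2 + (t + 1) ^ 2 + x * (t + 2)) := by
    rw [(hasDerivAt_tau ht).deriv, mul_eq_zero, sub_eq_zero] at hcrit
    rcases hcrit with h | h
    · exact absurd h (by positivity)
    · field_simp at h ⊢
      linarith
  have hq : 0 < t / (1 + t) := by positivity
  rw [tau, psi, Real.rpow_add hq, Real.rpow_one, hpow]
  field_simp
  ring

lemma psi_strictMonoOn {x : ℝ} (hx : -1 < x) : StrictMonoOn (psi x) (Set.Icc 0 (x + 1)) := by
  rintro u ⟨hu0, hux⟩ v ⟨hv0, hvx⟩ huv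
  have hprod : u * v < (x + 1) ^ 2 := by nlinarith
  unfold psi
  rw [div_lt_div_iff₀ (by nlinarith) (by nlinarith)]
  nlinarith [mul_pos (sub_pos.mpr huv) (sub_pos.mpr hprod)]

lemma psi_self {x : ℝ} (hx : x + 1 ≠ 0) : psi x x = x / (3 * x + 1) := by
  rw [psi, show x ^ 2 + (x + 1) ^ 2 + x * (x + 2) = (x + 1) * (3 * x + 1) by ring,
    mul_div_mul_left _ _ hx]

theorem stmt13 : ∀ x : ℝ, 1 ≤ x → ∀ t₀ : ℝ, t₀ ∈ Set.Ioo 0 x →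
    deriv (fun t => tau x t) t₀ = 0 →
    tau x t₀ < x/(3*x+1) ∧ tau x t₀ < 1/3 := by
  rintro x hx t₀ ⟨ht₀, htx⟩ hcrit
  have hlt : tau x t₀ < x / (3 * x + 1) := by
    rw [tau_eq_psi_of_deriv_eq_zero (by linarith) ht₀ hcrit, ← psi_self (by linarith)]
    exact psi_strictMonoOn (by linarith) ⟨ht₀.le, by linarith⟩ ⟨by linarith, by linarith⟩ htx
  refine ⟨hlt, hlt.trans ?_⟩
  rw [div_lt_div_iff₀ (by linarith) three_pos]
  linarith
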